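/- Let (c_k)_{k≥1} be a sequence of real numbers such that (i) c_1 > 0, (ii) c_{k+1} > 1 for all k ≥ 1, and (iii) for every k ≥ 1 there exists an integer ν > k such that c_{k+1}·c_{k+2}⋯c_ν is a positive integer. Then W(c_k) is a closed subset of ℝ. -/

import Mathlib

/-!
Let `A n ∈ W(c_k)` converge to `A₀` and fix `k`. Along the sequence `x n = A n ^ C_k → x = A₀ ^ C_k`,
the floors `⌊x n⌋` are prime and equal `⌊x⌋` whenever `x n ≥ ⌊x⌋` and `n` is large. If instead
`x n < ⌊x⌋` eventually, this forces `x = N` to be an integer and `⌊x n⌋ = N - 1` eventually.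
Condition (iii) gives an integer `m ≥ 2` with `C_ν = m C_k`, so `⌊x n ^ m⌋ = N ^ m - 1` is prime
as well; but `N - 1` divides `N ^ m - 1`, so both cannot be prime. Finally `A₀ > 1` because
`⌊A₀ ^ C_1⌋` is prime.
-/

open Filter Topology

/-- `Cprod c k = c 1 * c 2 * ⋯ * c k`. -/
noncomputable def Cprod (c : ℕ → ℝ) (k : ℕ) : ℝ := ∏ i ∈ Finset.Icc 1 k, c i

/-- The set `W(c_k)` of `A > 1` such that `⌊A ^ (c 1 ⋯ c k)⌋` is prime for every `k ≥ 1`. -/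
noncomputable def Wset (c : ℕ → ℝ) : Set ℝ :=
  {A : ℝ | 1 < A ∧ ∀ k : ℕ, 1 ≤ k → Prime ⌊A ^ Cprod c k⌋}

lemma Int.not_prime_pow_sub_one_of_prime_sub_one {N : ℤ} {m : ℕ} (hN : 0 ≤ N) (hm : 2 ≤ m)
    (hp : Prime (N - 1)) : ¬ Prime (N ^ m - 1) := by
  intro hq
  have hN3 : 3 ≤ N := by
    have h₁ := hp.not_isUnit
    have h₂ := hp.ne_zero
    rw [Int.isUnit_iff] at h₁
    omega
  have hlt : N < N ^ m :=
    calc N < N ^ 2 := by nlinarith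
      _ ≤ N ^ m := pow_le_pow_right₀ (by omega) hm
  have hdvd : N - 1 ∣ N ^ m - 1 := by simpa using sub_dvd_pow_sub_pow N 1 m
  have := Int.natAbs_eq_iff_associated.2 (hp.associated_of_dvd hq hdvd)
  omega

lemma two_le_of_prime_floor {x : ℝ} (hx : 0 ≤ x) (h : Prime ⌊x⌋) : 2 ≤ x := by
  have h₁ := h.not_isUnit
  have h₂ := h.ne_zero
  rw [Int.isUnit_iff] at h₁
  have : (2 : ℤ) ≤ ⌊x⌋ := by have := Int.floor_nonneg.2 hx; omega
  exact Int.le_floor.1 (by exact_mod_cast this)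

section FloorLimits

variable {α : Type*} {l : Filter α} {f : α → ℝ}

lemma eventually_floor_eq_of_tendsto {x : ℝ} (hf : Tendsto f l (𝓝 x)) :
    ∀ᶠ a in l, (⌊x⌋ : ℝ) ≤ f a → ⌊f a⌋ = ⌊x⌋ := by
  filter_upwards [hf.eventually_lt_const (Int.lt_floor_add_one x)] with a ha hle
  exact Int.floor_eq_iff.2 ⟨hle, ha⟩

lemma eventually_floor_eq_sub_one_of_tendsto {N : ℤ} (hf : Tendsto f l (𝓝 N))
    (hlt : ∀ᶠ a in l, f a < N) : ∀ᶠ a in l, ⌊f a⌋ = N - 1 := by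
  filter_upwards [hlt, hf.eventually_const_lt (sub_one_lt (N : ℝ))] with a hlt hgt
  exact Int.floor_eq_iff.2 ⟨by push_cast; linarith, by push_cast; linarith⟩

lemma prime_floor_of_tendsto [l.NeBot] {x : ℝ} {m : ℕ} (hm : 2 ≤ m) (hf0 : ∀ a, 0 ≤ f a)
    (hf : Tendsto f l (𝓝 x)) (hprime : ∀ a, Prime ⌊f a⌋) (hprime_pow : ∀ a, Prime ⌊f a ^ m⌋) :
    Prime ⌊x⌋ := by
  by_cases hfreq : ∃ᶠ a in l, (⌊x⌋ : ℝ) ≤ f a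
  · obtain ⟨a, hle, heq⟩ := (hfreq.and_eventually (eventually_floor_eq_of_tendsto hf)).exists
    exact heq hle ▸ hprime a
  exfalso
  set N := ⌊x⌋
  have hlt : ∀ᶠ a in l, f a < N := by simpa using not_frequently.1 hfreq
  have hx : x = N :=
    le_antisymm (le_of_tendsto hf (hlt.mono fun _ => le_of_lt)) (Int.floor_le x)
  rw [hx] at hf
  have hf_pow : Tendsto (fun a => f a ^ m) l (𝓝 ((N ^ m : ℤ) : ℝ)) := by
    push_cast; exact hf.pow m
  have hlt_pow : ∀ᶠ a in l, f a ^ m < ((N ^ m : ℤ) : ℝ) := by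
    filter_upwards [hlt] with a ha
    push_cast
    exact pow_lt_pow_left₀ ha (hf0 a) (by omega)
  obtain ⟨a, ha⟩ := (eventually_floor_eq_sub_one_of_tendsto hf hlt).exists
  obtain ⟨b, hb⟩ := (eventually_floor_eq_sub_one_of_tendsto hf_pow hlt_pow).exists
  have hN : 0 ≤ N := Int.floor_nonneg.2 (hx ▸ ge_of_tendsto' hf hf0)
  exact Int.not_prime_pow_sub_one_of_prime_sub_one hN hm (ha ▸ hprime a) (hb ▸ hprime_pow b)

end FloorLimits

section Cprod

variable {c : ℕ → ℝ}

lemma Cprod_mul_prod_Icc {k ν : ℕ} (hkν : k ≤ ν) :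
    Cprod c k * ∏ i ∈ Finset.Icc (k + 1) ν, c i = Cprod c ν := by
  simpa only [Cprod, ← Finset.Icc_add_one_left_eq_Ioc, zero_add] using
    Finset.prod_Ioc_consecutive c (Nat.zero_le k) hkν

lemma pos_of_one_lt_succ (h1 : 0 < c 1) (h2 : ∀ k : ℕ, 1 ≤ k → 1 < c (k + 1)) {i : ℕ}
    (hi : 1 ≤ i) : 0 < c i := by
  obtain rfl | hi := hi.eq_or_lt
  · exact h1
  obtain ⟨j, rfl⟩ := Nat.exists_eq_add_one_of_ne_zero (by omega : i ≠ 0)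
  linarith [h2 j (by omega)]

lemma Cprod_pos (hc : ∀ i, 1 ≤ i → 0 < c i) (k : ℕ) : 0 < Cprod c k :=
  Finset.prod_pos fun i hi => hc i (Finset.mem_Icc.1 hi).1

lemma one_lt_prod_Icc_succ (h2 : ∀ k : ℕ, 1 ≤ k → 1 < c (k + 1)) {k ν : ℕ} (hk : 1 ≤ k)
    (hkν : k < ν) : 1 < ∏ i ∈ Finset.Icc (k + 1) ν, c i := by
  have hgt : ∀ i ∈ Finset.Icc (k + 1) ν, 1 < c i := fun i hi => by
    obtain ⟨j, rfl⟩ := Nat.exists_eq_add_one_of_ne_zero (by simp at hi; omega : i ≠ 0)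
    exact h2 j (by simp at hi; omega)
  simpa using Finset.prod_lt_prod_of_nonempty (fun _ _ => one_pos) hgt
    ⟨k + 1, Finset.mem_Icc.2 ⟨le_rfl, hkν⟩⟩

end Cprod

theorem Wset_isClosed (c : ℕ → ℝ) (h1 : 0 < c 1)
    (h2 : ∀ k : ℕ, 1 ≤ k → 1 < c (k + 1))
    (h3 : ∀ k : ℕ, 1 ≤ k → ∃ ν : ℕ, k < ν ∧
      ∃ m : ℕ, 0 < m ∧ (∏ i ∈ Finset.Icc (k + 1) ν, c i) = (m : ℝ)) :
    IsClosed (Wset c) := by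
  have hc : ∀ i, 1 ≤ i → 0 < c i := fun _ => pos_of_one_lt_succ h1 h2
  refine IsSeqClosed.isClosed fun A A₀ hA hlim => ?_
  have hA₀ : 0 ≤ A₀ := ge_of_tendsto' hlim fun n => (zero_lt_one.trans (hA n).1).le
  have hprime : ∀ k, 1 ≤ k → Prime ⌊A₀ ^ Cprod c k⌋ := by
    intro k hk
    obtain ⟨ν, hkν, m, -, hm⟩ := h3 k hk
    have hm2 : 2 ≤ m := by
      have := hm ▸ one_lt_prod_Icc_succ h2 hk hkν
      exact_mod_cast this
    refine prime_floor_of_tendsto hm2 (fun n => by have := (hA n).1; positivity)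
      (hlim.rpow_const (.inr (Cprod_pos hc k).le)) (fun n => (hA n).2 k hk) fun n => ?_
    rw [← Real.rpow_natCast, ← Real.rpow_mul (by linarith [(hA n).1]), ← hm,
      Cprod_mul_prod_Icc hkν.le]
    exact (hA n).2 ν (hk.trans hkν.le)
  refine ⟨lt_of_not_ge fun hle => ?_, hprime⟩
  have h2le := two_le_of_prime_floor (by positivity) (hprime 1 le_rfl)
  linarith [Real.rpow_le_one hA₀ hle (Cprod_pos hc 1).le]
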